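/- arXiv:1907.12143 — 2 statements merged into one kernel-verified Lean document; each statement's English description precedes it below -/
import Mathlib

section
/- For every natural number n ≥ 1 and real x, the n-th derivative of arctan at x equals (1/(1+x²))·P_{n−1}(−2x/(1+x²), −1/(1+x²)), where P_k(x,y) = k!·Σ_{r=0}^{⌊k/2⌋} x^{k−2r}·y^r·(k−r)!/((k−2r)!·r!). -/
open Finset

/-- The two-variable Legendre-like polynomials P_k(x,y). -/
noncomputable def P (k : ℕ) (x y : ℝ) : ℝ :=
  (Nat.factorial k : ℝ) *
    ∑ r ∈ range (k / 2 + 1),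
      x ^ (k - 2 * r) * y ^ r * (Nat.factorial (k - r) : ℝ) /
        ((Nat.factorial (k - 2 * r) : ℝ) * (Nat.factorial r : ℝ))

noncomputable def c (k r : ℕ) : ℝ :=
  if 2*r ≤ k then
    (Nat.factorial k : ℝ) * (-1)^(k-r) * 2^(k-2*r) * (Nat.factorial (k-r) : ℝ) /
      ((Nat.factorial (k-2*r) : ℝ) * (Nat.factorial r : ℝ))
  else 0

lemma c_zero {k r : ℕ} (h : k < 2*r) : c k r = 0 := by
  simp [c, Nat.not_le.mpr h]

lemma c0 (k : ℕ) : c (k+1) 0 = -2*((k:ℝ)+1) * c k 0 := by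
  rw [c, c, if_pos (by omega), if_pos (by omega)]
  simp only [Nat.mul_zero, Nat.sub_zero, Nat.factorial_zero, Nat.factorial_succ, pow_succ]
  have f : (Nat.factorial k : ℝ) ≠ 0 := by positivity
  push_cast
  field_simp

lemma crec (k r : ℕ) (hr : 1 ≤ r) (h : 2*r ≤ k+1) :
    c (k+1) r = ((k:ℝ)+2-2*r) * c k (r-1) - 2*((k:ℝ)+1-r) * c k r := by
  have h1 : 2*(r-1) ≤ k := by omega
  have hfr : ((Nat.factorial r : ℕ):ℝ) = (r:ℝ) * (Nat.factorial (r-1) : ℝ) := by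
    have h5 : Nat.factorial r = r * Nat.factorial (r-1) := by
      conv_lhs => rw [show r = r-1+1 from by omega]
      rw [Nat.factorial_succ]
      congr 2
      omega
    rw [h5]; push_cast; ring
  have f2 : (Nat.factorial (k-r) : ℝ) ≠ 0 := by positivity
  have f3 : (Nat.factorial (r-1) : ℝ) ≠ 0 := by positivity
  have hr0 : (r:ℝ) ≠ 0 := by positivity
  have c1 : ((k-r:ℕ):ℝ) = (k:ℝ) - r := by
    rw [Nat.cast_sub (by omega)]
  have c3 : ((r-1:ℕ):ℝ) = (r:ℝ) - 1 := by
    rw [Nat.cast_sub (by omega)]; norm_num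
  by_cases h2 : 2*r ≤ k
  · rw [c, c, c, if_pos h, if_pos h1, if_pos h2]
    have e1 : k+1-r = (k-r)+1 := by omega
    have e2 : k+1-2*r = (k-2*r)+1 := by omega
    have e3 : k-(r-1) = (k-r)+1 := by omega
    have e4 : k-2*(r-1) = (k-2*r+1)+1 := by omega
    rw [e1, e2, e3, e4, hfr]
    simp only [Nat.factorial_succ, pow_succ]
    have c2 : ((k-2*r:ℕ):ℝ) = (k:ℝ) - 2*r := by
      rw [Nat.cast_sub (by omega)]; push_cast; ring
    have f1 : (Nat.factorial (k-2*r) : ℝ) ≠ 0 := by positivity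
    have nn1 : (0:ℝ) ≤ (k:ℝ) - 2*r := by rw [← c2]; positivity
    have nn2 : (0:ℝ) ≤ (k:ℝ) - r := by rw [← c1]; positivity
    push_cast
    rw [c1, c2]
    have q1 : (k:ℝ)-2*r+1 ≠ 0 := ne_of_gt (by linarith)
    have q2 : (k:ℝ)-2*r+1+1 ≠ 0 := ne_of_gt (by linarith)
    have q3 : (k:ℝ)-r+1 ≠ 0 := ne_of_gt (by linarith)
    field_simp
    ring
  · have h2' : 2*r = k+1 := by omega
    rw [c, c, if_pos h, if_pos h1, c_zero (by omega)]
    have e2 : k+1-2*r = 0 := by omega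
    have e3 : k-(r-1) = (k-r)+1 := by omega
    have e4 : k-2*(r-1) = 1 := by omega
    have e1 : k+1-r = (k-r)+1 := by omega
    rw [e1, e2, e3, e4, hfr]
    simp only [Nat.factorial_succ, Nat.factorial_zero, Nat.factorial_one, pow_succ]
    push_cast
    rw [c1]
    have hk : (k:ℝ) = 2*r - 1 := by
      have : ((2*r : ℕ):ℝ) = ((k+1 : ℕ):ℝ) := by exact_mod_cast congrArg (Nat.cast : ℕ → ℝ) h2'
      push_cast at this; linarith
    rw [hk]
    have nn2 : (0:ℝ) ≤ 2*(r:ℝ) - 1 - r := by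
      rw [show (2*(r:ℝ)-1) = (k:ℝ) from hk.symm, ← c1]; positivity
    field_simp
    ring

noncomputable def g (k : ℕ) (x : ℝ) : ℝ :=
  ∑ r ∈ range (k+2), c k r * x ^ (k-2*r) * ((1+x^2) ^ (k+1-r))⁻¹

lemma g_zero (x : ℝ) : g 0 x = 1 / (1 + x^2) := by
  rw [g]
  rw [Finset.sum_range_succ, Finset.sum_range_succ, Finset.sum_range_zero]
  norm_num [c, Nat.factorial]

lemma term_deriv (k r : ℕ) (x : ℝ) :
    HasDerivAt (fun x : ℝ => c k r * x ^ (k-2*r) * ((1+x^2) ^ (k+1-r))⁻¹)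
      (c k r * (↑(k-2*r) * x ^ (k-2*r-1) * ((1+x^2) ^ (k+1-r))⁻¹
        - 2 * ↑(k+1-r) * x * x ^ (k-2*r) * ((1+x^2) ^ (k+2-r))⁻¹)) x := by
  by_cases hc : 2*r ≤ k
  · have hb : (0:ℝ) < 1 + x^2 := by positivity
    have hbne : (1:ℝ) + x^2 ≠ 0 := ne_of_gt hb
    have h1 : HasDerivAt (fun x : ℝ => 1 + x^2) (2*x) x := by
      simpa using ((hasDerivAt_pow 2 x).const_add 1)
    have h2 : HasDerivAt (fun x : ℝ => (1+x^2) ^ (k+1-r))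
        (↑(k+1-r) * (1+x^2) ^ (k+1-r-1) * (2*x)) x := h1.pow _
    have h3 := h2.inv (by positivity)
    have h4 : HasDerivAt (fun x : ℝ => x ^ (k-2*r)) (↑(k-2*r) * x ^ (k-2*r-1)) x :=
      hasDerivAt_pow _ _
    have h5 := (h4.mul h3).const_mul (c k r)
    rw [show (fun x : ℝ => c k r * x ^ (k-2*r) * ((1+x^2) ^ (k+1-r))⁻¹)
        = (fun x : ℝ => c k r * (x ^ (k-2*r) * ((1+x^2) ^ (k+1-r))⁻¹)) from by
      funext y; ring]
    refine h5.congr_deriv ?_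
    have e1 : k+1-r = (k-r)+1 := by omega
    have e2 : k+2-r = (k-r)+2 := by omega
    rw [e1, e2]
    simp only [Nat.add_sub_cancel, Pi.inv_apply]
    push_cast
    field_simp
    ring
  · have hc0 : c k r = 0 := c_zero (by omega)
    simp only [hc0, zero_mul]
    simpa using hasDerivAt_const x (0:ℝ)

lemma sum_identity (k : ℕ) (x : ℝ) :
    ∑ r ∈ range (k+3), c (k+1) r * x ^ (k+1-2*r) * ((1+x^2) ^ (k+2-r))⁻¹
      = ∑ r ∈ range (k+2), c k r * (↑(k-2*r) * x ^ (k-2*r-1) * ((1+x^2) ^ (k+1-r))⁻¹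
        - 2 * ↑(k+1-r) * x * x ^ (k-2*r) * ((1+x^2) ^ (k+2-r))⁻¹) := by
  set A : ℕ → ℝ := fun r => c k r * (-(2 * (↑(k+1-r) : ℝ))) * x * x ^ (k-2*r) * ((1+x^2) ^ (k+2-r))⁻¹ with hA
  set B : ℕ → ℝ := fun r => c k r * ↑(k-2*r) * x ^ (k-2*r-1) * ((1+x^2) ^ (k+1-r))⁻¹ with hB
  have rhs_eq : ∑ r ∈ range (k+2), c k r * (↑(k-2*r) * x ^ (k-2*r-1) * ((1+x^2) ^ (k+1-r))⁻¹
        - 2 * ↑(k+1-r) * x * x ^ (k-2*r) * ((1+x^2) ^ (k+2-r))⁻¹)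
      = ∑ r ∈ range (k+2), (B r + A r) := by
    apply Finset.sum_congr rfl
    intro r _
    simp only [hA, hB]
    ring
  rw [rhs_eq, Finset.sum_add_distrib]
  have hAtop : A (k+2) = 0 := by
    simp [hA, c_zero (show k < 2*(k+2) by omega)]
  have hAext : ∑ r ∈ range (k+2), A r = ∑ r ∈ range (k+3), A r := by
    conv_rhs => rw [Finset.sum_range_succ]
    rw [hAtop, add_zero]
  set B2 : ℕ → ℝ := fun r => if r = 0 then 0 else B (r-1) with hB2
  have hBext : ∑ r ∈ range (k+2), B r = ∑ r ∈ range (k+3), B2 r := by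
    rw [Finset.sum_range_succ' B2]
    simp [hB2]
  rw [hAext, hBext, ← Finset.sum_add_distrib]
  apply Finset.sum_congr rfl
  intro r hr
  rw [Finset.mem_range] at hr
  match r with
  | 0 =>
    simp only [hA, hB2, if_pos rfl, add_zero, Nat.mul_zero, Nat.sub_zero]
    rw [c0 k]
    push_cast
    ring
  | (s+1) =>
    simp only [hB2, hA, hB]
    have hmatch : k+2-(s+1) = k+1-s := by omega
    rw [if_neg (by omega), Nat.add_sub_cancel, hmatch]
    by_cases hcase : 2*(s+1) ≤ k+1
    · rw [crec k (s+1) (by omega) hcase, Nat.add_sub_cancel]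
      have cast1 : ((k-2*s:ℕ):ℝ) = (k:ℝ) - 2*s := by
        rw [Nat.cast_sub (by omega)]; push_cast; ring
      have cast2 : ((k+1-(s+1):ℕ):ℝ) = (k:ℝ) - s := by
        rw [show k+1-(s+1) = k-s by omega, Nat.cast_sub (by omega)]
      by_cases hcase2 : 2*(s+1) ≤ k
      · have e1 : k+1-2*(s+1) = (k-2*(s+1))+1 := by omega
        have e2 : k-2*s-1 = (k-2*(s+1))+1 := by omega
        rw [e1, e2, cast1, cast2]
        push_cast
        ring
      · have hk : k = 2*s+1 := by omega
        rw [c_zero (show k < 2*(s+1) by omega)]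
        have e1 : k+1-2*(s+1) = 0 := by omega
        have e2 : k-2*s-1 = 0 := by omega
        rw [e1, e2, cast1]
        push_cast
        ring
    · have h1 : c (k+1) (s+1) = 0 := c_zero (by omega)
      have h2 : c k (s+1) = 0 := c_zero (by omega)
      rw [h1, h2]
      by_cases h3 : 2*s ≤ k
      · have : k - 2*s = 0 := by omega
        rw [this]
        push_cast
        ring
      · rw [c_zero (show k < 2*s by omega)]
        ring

lemma g_hasDerivAt (k : ℕ) (x : ℝ) : HasDerivAt (g k) (g (k+1) x) x := by
  have H : HasDerivAt (fun y : ℝ => ∑ r ∈ range (k+2), c k r * y ^ (k-2*r) * ((1+y^2) ^ (k+1-r))⁻¹)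
      (∑ r ∈ range (k+2), c k r * (↑(k-2*r) * x ^ (k-2*r-1) * ((1+x^2) ^ (k+1-r))⁻¹
        - 2 * ↑(k+1-r) * x * x ^ (k-2*r) * ((1+x^2) ^ (k+2-r))⁻¹)) x := by
    exact HasDerivAt.fun_sum fun r _ => term_deriv k r x
  have hg : g (k+1) x = ∑ r ∈ range (k+2), c k r * (↑(k-2*r) * x ^ (k-2*r-1) * ((1+x^2) ^ (k+1-r))⁻¹
        - 2 * ↑(k+1-r) * x * x ^ (k-2*r) * ((1+x^2) ^ (k+2-r))⁻¹) := by
    rw [g, show k+1+2 = k+3 from by norm_num]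
    simp only [show k+1+1 = k+2 from by norm_num]
    exact sum_identity k x
  rw [hg]
  exact H

lemma iter_arctan (n : ℕ) : ∀ x : ℝ, iteratedDeriv (n+1) Real.arctan x = g n x := by
  induction n with
  | zero =>
    intro x
    rw [iteratedDeriv_one, Real.deriv_arctan, g_zero]
  | succ m ih =>
    intro x
    rw [iteratedDeriv_succ]
    have : iteratedDeriv (m+1) Real.arctan = g m := funext ih
    rw [this, (g_hasDerivAt m x).deriv]

lemma g_eq_P (k : ℕ) (x : ℝ) :
    (1 / (1 + x ^ 2)) * P k (-(2 * x) / (1 + x ^ 2)) (-(1 / (1 + x ^ 2))) = g k x := by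
  have hx : (0:ℝ) < 1 + x^2 := by positivity
  have hb : ((1:ℝ)+x^2) ≠ 0 := ne_of_gt hx
  rw [P, g]
  rw [← Finset.sum_subset (Finset.range_subset_range.mpr (show k/2+1 ≤ k+2 by omega))
    (fun r _ hr => by
      rw [Finset.mem_range, not_lt] at hr
      rw [c_zero (show k < 2*r by omega)]
      ring)]
  rw [Finset.mul_sum, Finset.mul_sum]
  refine Finset.sum_congr rfl fun r hr => ?_
  rw [Finset.mem_range] at hr
  have h2r : 2*r ≤ k := by omega
  rw [c, if_pos h2r]
  have e : k - r = (k-2*r) + r := by omega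
  have e2 : k + 1 - r = (k-2*r) + r + 1 := by omega
  rw [e2, e]
  rw [neg_div, neg_pow, neg_pow]
  simp only [div_pow, mul_pow, one_pow, pow_add]
  field_simp
  have hr' : ((1+x^2)⁻¹)^r * (1+x^2)^r = 1 := by rw [inv_pow, inv_mul_cancel₀ (pow_ne_zero _ hb)]
  linear_combination (x ^ (k - 2 * r) * (-1) ^ r) * hr'

theorem stmt4 (n : ℕ) (hn : 1 ≤ n) (x : ℝ) :
    iteratedDeriv n Real.arctan x =
      (1 / (1 + x ^ 2)) * P (n - 1) (-(2 * x) / (1 + x ^ 2)) (-(1 / (1 + x ^ 2))) := by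
  obtain ⟨m, rfl⟩ : ∃ m, n = m + 1 := ⟨n - 1, by omega⟩
  rw [iter_arctan m x, Nat.add_sub_cancel, g_eq_P]
end

section
/- For every natural number n ≥ 1 and every real x with |x| < 1, the n-th derivative of arccos at x equals −(1−x²)^{−1/2}·P_{n−1}^{1/2}(2x/(1−x²), 1/(1−x²)), where P_k^{1/2}(x,y) = (k!/Γ(1/2))·Σ_{r=0}^{⌊k/2⌋} x^{k−2r}·y^r·Γ(1/2+k−r)/((k−2r)!·r!). -/
open Finset

/-- The polynomials P_k^ν(x,y). -/
noncomputable def Pnu (k : ℕ) (ν : ℝ) (x y : ℝ) : ℝ :=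
  ((Nat.factorial k : ℝ) / Real.Gamma ν) *
    ∑ r ∈ range (k / 2 + 1),
      x ^ (k - 2 * r) * y ^ r * Real.Gamma (ν + k - r) /
        ((Nat.factorial (k - 2 * r) : ℝ) * (Nat.factorial r : ℝ))

namespace Stmt7Aux

open Real

noncomputable def c (k r : ℕ) : ℝ :=
  (Nat.factorial k : ℝ) * 2 ^ ((k : ℝ) - 2 * r) * Real.Gamma (1 / 2 + k - r) /
    (Real.Gamma (1 / 2) * Real.Gamma ((k : ℝ) - 2 * r + 1) * (Nat.factorial r : ℝ))

noncomputable def T (k r : ℕ) (x : ℝ) : ℝ :=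
  x ^ (k - 2 * r) * (1 - x ^ 2) ^ (-(1 / 2 : ℝ) - ((k : ℝ) - r))

noncomputable def g (k : ℕ) (x : ℝ) : ℝ := ∑ r ∈ range (k + 1), c k r * T k r x

lemma c_eq_zero {k r : ℕ} (h : k < 2 * r) : c k r = 0 := by
  have h1 : (k : ℝ) - 2 * r + 1 = -((2 * r - (k + 1) : ℕ) : ℝ) := by
    rw [Nat.cast_sub (by omega : k + 1 ≤ 2 * r)]
    push_cast; ring
  rw [c, h1, Real.Gamma_neg_nat_eq_zero]
  simp

lemma hGhalf : Real.Gamma (1 / 2) ≠ 0 := (Real.Gamma_pos_of_pos (by norm_num)).ne'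

lemma one_sub_sq_pos {x : ℝ} (hx : |x| < 1) : (0 : ℝ) < 1 - x ^ 2 := by
  have h1 := (abs_lt.mp hx).1
  have h2 := (abs_lt.mp hx).2
  nlinarith

lemma hasDerivAt_T {k r : ℕ} (h : 2 * r ≤ k) {x : ℝ} (hx : |x| < 1) :
    HasDerivAt (T k r)
      (((k : ℝ) - 2 * r) * T (k + 1) (r + 1) x + (2 * ((k : ℝ) - r) + 1) * T (k + 1) r x) x := by
  have h2 : (0 : ℝ) < 1 - x ^ 2 := one_sub_sq_pos hx
  have hpow : HasDerivAt (fun y : ℝ => y ^ (k - 2 * r))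
      ((↑(k - 2 * r)) * x ^ (k - 2 * r - 1)) x := hasDerivAt_pow _ x
  have hbase : HasDerivAt (fun y : ℝ => 1 - y ^ 2) (-(2 * x)) x := by
    simpa using ((hasDerivAt_pow 2 x).const_sub 1)
  have hrpow : HasDerivAt (fun y : ℝ => (1 - y ^ 2) ^ (-(1 / 2 : ℝ) - ((k : ℝ) - r)))
      ((-(2 * x)) * (-(1 / 2 : ℝ) - ((k : ℝ) - r)) *
        (1 - x ^ 2) ^ ((-(1 / 2 : ℝ) - ((k : ℝ) - r)) - 1)) x := hbase.rpow_const (Or.inl h2.ne')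
  have H := hpow.mul hrpow
  have e1 : k + 1 - 2 * (r + 1) = k - 2 * r - 1 := by omega
  have e2 : k + 1 - 2 * r = k - 2 * r + 1 := by omega
  have e3 : -(1 / 2 : ℝ) - (((k + 1 : ℕ) : ℝ) - ((r + 1 : ℕ) : ℝ)) =
      -(1 / 2 : ℝ) - ((k : ℝ) - r) := by push_cast; ring
  have e4 : -(1 / 2 : ℝ) - (((k + 1 : ℕ) : ℝ) - (r : ℝ)) =
      (-(1 / 2 : ℝ) - ((k : ℝ) - r)) - 1 := by push_cast; ring
  have e5 : ((k - 2 * r : ℕ) : ℝ) = (k : ℝ) - 2 * r := by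
    rw [Nat.cast_sub h]; push_cast; ring
  refine H.congr_deriv ?_
  simp only [T, e1, e2, e3, e4, e5, pow_succ]
  ring

lemma c_succ_succ (k r : ℕ) : c (k + 1) (r + 1) =
    ((k : ℝ) + 1) * (Nat.factorial k : ℝ) * 2 ^ ((k : ℝ) - 2 * r - 1) *
      Real.Gamma (1 / 2 + (k : ℝ) - r) /
    (Real.Gamma (1 / 2) * Real.Gamma ((k : ℝ) - 2 * r - 1 + 1) *
      (((r : ℝ) + 1) * (Nat.factorial r : ℝ))) := by
  rw [c, Nat.factorial_succ k, Nat.factorial_succ r,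
    show ((k + 1 : ℕ) : ℝ) - 2 * ((r + 1 : ℕ) : ℝ) = (k : ℝ) - 2 * r - 1 by push_cast; ring,
    show (1 / 2 : ℝ) + ((k + 1 : ℕ) : ℝ) - ((r + 1 : ℕ) : ℝ) = 1 / 2 + (k : ℝ) - r by
      push_cast; ring]
  push_cast; ring

lemma c_succ (k r : ℕ) : c k (r + 1) =
    (Nat.factorial k : ℝ) * 2 ^ ((k : ℝ) - 2 * r - 2) * Real.Gamma ((k : ℝ) - r - 1 / 2) /
    (Real.Gamma (1 / 2) * Real.Gamma ((k : ℝ) - 2 * r - 2 + 1) *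
      (((r : ℝ) + 1) * (Nat.factorial r : ℝ))) := by
  rw [c, Nat.factorial_succ r,
    show (k : ℝ) - 2 * ((r + 1 : ℕ) : ℝ) = (k : ℝ) - 2 * r - 2 by push_cast; ring,
    show (1 / 2 : ℝ) + (k : ℝ) - ((r + 1 : ℕ) : ℝ) = (k : ℝ) - r - 1 / 2 by push_cast; ring]
  push_cast; ring

lemma key0 (k : ℕ) : c (k + 1) 0 = (2 * (k : ℝ) + 1) * c k 0 := by
  rw [c, c, Nat.factorial_succ k,
    show ((k + 1 : ℕ) : ℝ) - 2 * ((0 : ℕ) : ℝ) = ((k : ℝ) - 2 * 0) + 1 by push_cast; ring,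
    show (1 / 2 : ℝ) + ((k + 1 : ℕ) : ℝ) - ((0 : ℕ) : ℝ) =
      ((1 / 2 : ℝ) + (k : ℝ) - ((0 : ℕ) : ℝ)) + 1 by push_cast; ring]
  have hk0 : (0 : ℝ) ≤ (k : ℝ) := Nat.cast_nonneg k
  have h1 : ((1 / 2 : ℝ) + (k : ℝ) - ((0 : ℕ) : ℝ)) ≠ 0 := by push_cast; linarith
  have h2 : ((k : ℝ) - 2 * 0 + 1) ≠ 0 := by linarith
  rw [Real.Gamma_add_one h1, Real.rpow_add_one two_ne_zero,
    show (k : ℝ) - 2 * 0 + 1 + 1 = ((k : ℝ) - 2 * 0 + 1) + 1 by ring,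
    Real.Gamma_add_one h2]
  have h3 : Real.Gamma ((k : ℝ) - 2 * 0 + 1) ≠ 0 := by
    apply (Real.Gamma_pos_of_pos ?_).ne'
    linarith
  push_cast at h3 ⊢
  field_simp
  push_cast
  ring

lemma keyS (k r : ℕ) :
    c (k + 1) (r + 1) = ((k : ℝ) - 2 * r) * c k r + (2 * ((k : ℝ) - (r + 1)) + 1) * c k (r + 1) := by
  rcases lt_or_ge k (2 * r) with hD | hk
  · rw [c_eq_zero (by omega : k + 1 < 2 * (r + 1)), c_eq_zero hD,
      c_eq_zero (by omega : k < 2 * (r + 1))]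
    ring
  rcases eq_or_lt_of_le hk with hC | hk
  · -- k = 2r
    subst hC
    rw [c_eq_zero (by omega : 2 * r + 1 < 2 * (r + 1)), c_eq_zero (by omega : 2 * r < 2 * (r + 1)),
      show ((2 * r : ℕ) : ℝ) - 2 * (r : ℝ) = 0 by push_cast; ring]
    ring
  rcases eq_or_lt_of_le (by omega : 2 * r + 1 ≤ k) with hB | hA
  · -- k = 2r + 1
    subst hB
    rw [c_succ_succ, c_eq_zero (by omega : 2 * r + 1 < 2 * (r + 1)), c,
      show ((2 * r + 1 : ℕ) : ℝ) - 2 * (r : ℝ) - 1 + 1 = 1 by push_cast; ring,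
      show ((2 * r + 1 : ℕ) : ℝ) - 2 * (r : ℝ) + 1 = 1 + 1 by push_cast; ring,
      Real.Gamma_add_one one_ne_zero, Real.Gamma_one,
      show ((2 * r + 1 : ℕ) : ℝ) - 2 * (r : ℝ) - 1 = 0 by push_cast; ring,
      show ((2 * r + 1 : ℕ) : ℝ) - 2 * (r : ℝ) = 0 + 1 by push_cast; ring,
      Real.rpow_add_one two_ne_zero, Real.rpow_zero,
      show (1 / 2 : ℝ) + ((2 * r + 1 : ℕ) : ℝ) - (r : ℝ) = 1 / 2 + ((2 * r + 1 : ℕ) : ℝ) - r by ring]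
    have hr : ((Nat.factorial r : ℕ) : ℝ) ≠ 0 := Nat.cast_ne_zero.mpr (Nat.factorial_ne_zero r)
    field_simp
    push_cast
    ring
  · -- 2r + 2 ≤ k
    have ha1 : (0 : ℝ) < (k : ℝ) - 2 * r - 1 := by
      have : (2 * r + 2 : ℝ) ≤ (k : ℝ) := by exact_mod_cast hA
      linarith
    have ha0 : (0 : ℝ) < (k : ℝ) - 2 * r := by linarith
    have hg : (0 : ℝ) < (k : ℝ) - r - 1 / 2 := by
      have h9 : (r : ℝ) ≤ (k : ℝ) := by
        have : r ≤ k := by omega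
        exact_mod_cast this
      nlinarith [ha1]
    have hb : ((k : ℝ) - 2 * r - 1 + 1) ≠ 0 := by linarith
    have GA : Real.Gamma ((k : ℝ) - 2 * (r : ℝ) + 1) =
        ((k : ℝ) - 2 * r) * (((k : ℝ) - 2 * r - 1) * Real.Gamma ((k : ℝ) - 2 * r - 1)) := by
      rw [show (k : ℝ) - 2 * (r : ℝ) + 1 = ((k : ℝ) - 2 * r - 1 + 1) + 1 by ring,
        Real.Gamma_add_one hb, Real.Gamma_add_one ha1.ne']
      ring
    have GB : Real.Gamma ((k : ℝ) - 2 * (r : ℝ) - 1 + 1) =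
        ((k : ℝ) - 2 * r - 1) * Real.Gamma ((k : ℝ) - 2 * r - 1) := Real.Gamma_add_one ha1.ne'
    have GC : Real.Gamma ((k : ℝ) - 2 * (r : ℝ) - 2 + 1) = Real.Gamma ((k : ℝ) - 2 * r - 1) := by
      rw [show (k : ℝ) - 2 * (r : ℝ) - 2 + 1 = (k : ℝ) - 2 * r - 1 by ring]
    have GD : Real.Gamma ((1 : ℝ) / 2 + (k : ℝ) - (r : ℝ)) =
        ((k : ℝ) - r - 1 / 2) * Real.Gamma ((k : ℝ) - r - 1 / 2) := by
      rw [show (1 : ℝ) / 2 + (k : ℝ) - (r : ℝ) = ((k : ℝ) - r - 1 / 2) + 1 by ring,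
        Real.Gamma_add_one hg.ne']
    have P1 : (2 : ℝ) ^ ((k : ℝ) - 2 * (r : ℝ) - 1) = 2 ^ ((k : ℝ) - 2 * r - 2) * 2 := by
      rw [show (k : ℝ) - 2 * (r : ℝ) - 1 = ((k : ℝ) - 2 * r - 2) + 1 by ring,
        Real.rpow_add_one two_ne_zero]
    have P2 : (2 : ℝ) ^ ((k : ℝ) - 2 * (r : ℝ)) = 2 ^ ((k : ℝ) - 2 * r - 2) * 2 * 2 := by
      conv_lhs => rw [show (k : ℝ) - 2 * (r : ℝ) = ((k : ℝ) - 2 * r - 1) + 1 by ring,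
        Real.rpow_add_one two_ne_zero, P1]
    rw [c_succ_succ, c_succ, c, GA, GB, GC, GD, P1, P2]
    have hG1 : Real.Gamma ((k : ℝ) - 2 * r - 1) ≠ 0 := (Real.Gamma_pos_of_pos ha1).ne'
    have hr : ((Nat.factorial r : ℕ) : ℝ) ≠ 0 := Nat.cast_ne_zero.mpr (Nat.factorial_ne_zero r)
    have hrp : ((r : ℝ) + 1) ≠ 0 := by positivity
    set G1 := Real.Gamma ((k : ℝ) - 2 * r - 1) with hG1def
    set G2 := Real.Gamma ((k : ℝ) - (r : ℝ) - 1 / 2) with hG2def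
    set F := Real.Gamma (1 / 2 : ℝ) with hFdef
    set P := (2 : ℝ) ^ ((k : ℝ) - 2 * r - 2) with hPdef
    have hF : F ≠ 0 := hGhalf
    field_simp
    ring

lemma g_deriv {k : ℕ} {x : ℝ} (hx : |x| < 1) : HasDerivAt (g k) (g (k + 1) x) x := by
  have H : HasDerivAt (fun y => ∑ r ∈ range (k + 1), c k r * T k r y)
      (∑ r ∈ range (k + 1), c k r *
        (((k : ℝ) - 2 * r) * T (k + 1) (r + 1) x + (2 * ((k : ℝ) - r) + 1) * T (k + 1) r x)) x := by
    apply HasDerivAt.fun_sum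
    intro r _
    rcases le_or_gt (2 * r) k with h | h
    · exact (hasDerivAt_T h hx).const_mul _
    · rw [c_eq_zero h]
      simp only [zero_mul]
      exact hasDerivAt_const x 0
  have hEq : g (k + 1) x = ∑ r ∈ range (k + 1), c k r *
      (((k : ℝ) - 2 * r) * T (k + 1) (r + 1) x + (2 * ((k : ℝ) - r) + 1) * T (k + 1) r x) := by
    set u : ℕ → ℝ := fun i => c k i * (2 * ((k : ℝ) - i) + 1) * T (k + 1) i x with hu
    have step : ∀ i ∈ range (k + 1), c (k + 1) (i + 1) * T (k + 1) (i + 1) x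
        = c k i * (((k : ℝ) - 2 * i) * T (k + 1) (i + 1) x +
            (2 * ((k : ℝ) - i) + 1) * T (k + 1) i x) + (u (i + 1) - u i) := by
      intro i _
      simp only [hu]
      rw [keyS k i]
      push_cast
      ring
    rw [g, Finset.sum_range_succ' (fun s => c (k + 1) s * T (k + 1) s x) (k + 1),
      Finset.sum_congr rfl step, Finset.sum_add_distrib, Finset.sum_range_sub u (k + 1), key0 k]
    have hzero : u (k + 1) = 0 := by
      simp only [hu]
      rw [c_eq_zero (by omega : k < 2 * (k + 1))]
      ring
    rw [hzero]
    simp only [hu]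
    push_cast
    ring
  rw [show g k = fun y => ∑ r ∈ range (k + 1), c k r * T k r y from rfl, hEq]
  exact H

lemma iter_g (k : ℕ) : ∀ x : ℝ, |x| < 1 →
    iteratedDeriv k (fun y : ℝ => (1 - y ^ 2) ^ (-(1 / 2 : ℝ))) x = g k x := by
  induction k with
  | zero =>
    intro x hx
    have hΓ : Real.Gamma (1 / 2) ≠ 0 := hGhalf
    simp [iteratedDeriv_zero, g, c, T, Real.Gamma_one]
    field_simp
  | succ k ih =>
    intro x hx
    rw [iteratedDeriv_succ]
    have hs : {y : ℝ | |y| < 1} ∈ nhds x :=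
      (isOpen_lt continuous_abs continuous_const).mem_nhds hx
    have hev : iteratedDeriv k (fun y : ℝ => (1 - y ^ 2) ^ (-(1 / 2 : ℝ))) =ᶠ[nhds x] g k := by
      filter_upwards [hs] with y hy using ih y hy
    rw [hev.deriv_eq]
    exact (g_deriv hx).deriv

lemma final {m : ℕ} {x : ℝ} (hx : |x| < 1) :
    (1 - x ^ 2) ^ (-(1 / 2 : ℝ)) * Pnu m (1 / 2) (2 * x / (1 - x ^ 2)) (1 / (1 - x ^ 2)) =
      g m x := by
  have h2 : (0 : ℝ) < 1 - x ^ 2 := one_sub_sq_pos hx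
  have hsub : range (m / 2 + 1) ⊆ range (m + 1) := Finset.range_subset_range.mpr (by omega)
  have hz : ∀ r ∈ range (m + 1), r ∉ range (m / 2 + 1) → c m r * T m r x = 0 := by
    intro r _ hr
    rw [c_eq_zero (by simp only [Finset.mem_range] at hr; omega : m < 2 * r)]
    ring
  rw [g, ← Finset.sum_subset hsub hz, Pnu, Finset.mul_sum, Finset.mul_sum]
  apply Finset.sum_congr rfl
  intro r hr
  have hrm : 2 * r ≤ m := by
    simp only [Finset.mem_range] at hr
    omega
  rw [c, T]
  have hcast : ((m - 2 * r : ℕ) : ℝ) = (m : ℝ) - 2 * r := by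
    rw [Nat.cast_sub hrm]; push_cast; ring
  have hG : Real.Gamma ((m : ℝ) - 2 * (r : ℝ) + 1) = (Nat.factorial (m - 2 * r) : ℝ) := by
    rw [show (m : ℝ) - 2 * (r : ℝ) + 1 = ((m - 2 * r : ℕ) : ℝ) + 1 by rw [hcast],
      Real.Gamma_nat_eq_factorial]
  have hP : (2 : ℝ) ^ ((m : ℝ) - 2 * (r : ℝ)) = (2 : ℝ) ^ (m - 2 * r : ℕ) := by
    rw [← hcast, Real.rpow_natCast]
  have hE : (1 - x ^ 2) ^ (-(1 / 2 : ℝ) - ((m : ℝ) - (r : ℝ))) =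
      (1 - x ^ 2) ^ (-(1 / 2 : ℝ)) * ((1 - x ^ 2) ^ (m - 2 * r : ℕ))⁻¹ *
        ((1 - x ^ 2) ^ r)⁻¹ := by
    rw [show -(1 / 2 : ℝ) - ((m : ℝ) - (r : ℝ)) =
        (-(1 / 2 : ℝ) + -(((m - 2 * r : ℕ) : ℝ))) + -((r : ℝ)) by rw [hcast]; push_cast; ring,
      Real.rpow_add h2, Real.rpow_add h2]
    rw [Real.rpow_neg h2.le ((m - 2 * r : ℕ) : ℝ), Real.rpow_neg h2.le (r : ℝ),
      Real.rpow_natCast, Real.rpow_natCast]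
  rw [hG, hP, hE]
  have hne : (1 - x ^ 2) ≠ 0 := h2.ne'
  have hf1 : (Nat.factorial (m - 2 * r) : ℝ) ≠ 0 := Nat.cast_ne_zero.mpr (Nat.factorial_ne_zero _)
  have hf2 : (Nat.factorial r : ℝ) ≠ 0 := Nat.cast_ne_zero.mpr (Nat.factorial_ne_zero _)
  have hgam : Real.Gamma (1 / 2 : ℝ) ≠ 0 := hGhalf
  simp only [div_pow, one_pow]
  field_simp
  ring

end Stmt7Aux

theorem stmt7 (n : ℕ) (hn : 1 ≤ n) (x : ℝ) (hx : |x| < 1) :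
    iteratedDeriv n Real.arccos x =
      -((1 - x ^ 2) ^ (-(1 / 2 : ℝ))) *
        Pnu (n - 1) (1 / 2) (2 * x / (1 - x ^ 2)) (1 / (1 - x ^ 2)) := by
  obtain ⟨m, rfl⟩ : ∃ m, n = m + 1 := ⟨n - 1, (Nat.succ_pred_eq_of_pos hn).symm⟩
  have hm : m + 1 - 1 = m := rfl
  rw [hm, iteratedDeriv_succ', Real.deriv_arccos]
  have hs : {y : ℝ | |y| < 1} ∈ nhds x :=
    (isOpen_lt continuous_abs continuous_const).mem_nhds hx
  have hev : (fun y : ℝ => -(1 / Real.sqrt (1 - y ^ 2))) =ᶠ[nhds x]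
      (fun y : ℝ => -((1 - y ^ 2) ^ (-(1 / 2 : ℝ)))) := by
    filter_upwards [hs] with y hy
    have h2 : (0 : ℝ) < 1 - y ^ 2 := Stmt7Aux.one_sub_sq_pos hy
    rw [Real.rpow_neg h2.le, ← Real.sqrt_eq_rpow, one_div]
  rw [hev.iteratedDeriv_eq m, iteratedDeriv_fun_neg, Stmt7Aux.iter_g m x hx,
    ← Stmt7Aux.final (m := m) hx]
  ring
end
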